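/- Let G be a topological abelian group whose topology is linear, i.e., has a neighborhood basis at 0 consisting of open subgroups. Then every quasi-character ω: G → 𝕋 is approximable: there exists a group homomorphism a: G → 𝕋 such that ω·a⁻¹ is continuous at 0. -/

import Mathlib

noncomputable section

/-- The circle group `𝕋 = ℝ/ℤ`. -/
abbrev 𝕋 := AddCircle (1 : ℝ)

instance : Fact ((0 : ℝ) < 1) := ⟨one_pos⟩

/-- `⟨t⟩`: the unique representative of `t` in the interval `(-1/2, 1/2]`. -/
def torusArg (t : 𝕋) : ℝ := (AddCircle.equivIoc 1 (-(1/2)) t : ℝ)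

/-- `θ(t) = |⟨t⟩|`, the norm of `t ∈ 𝕋`. -/
def torusNorm (t : 𝕋) : ℝ := |torusArg t|

/-- `T_β = {t ∈ 𝕋 : θ(t) ≤ β}`. -/
def Tset (β : ℝ) : Set 𝕋 := {t | torusNorm t ≤ β}

/-!
On an open subgroup `U` on which the defect `ω (x + y) - ω x - ω y` stays below `1/8`, the defect
lifts to a small real-valued function `r` satisfying, on the nose, the doubling identity that the
defect of any map satisfies modulo `1`. The Hyers-type series `ρ x = ∑ r (2ⁿ x) (2ⁿ x) / 2ⁿ⁺¹`
then converges to a bounded function with `ρ (x + y) = ρ x + ρ y - r x y`, so `ω + ρ` is a character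
of `U` within `1/8` of `ω`; it extends to `G` because `𝕋` is divisible. Finally `ψ = ω - a` is
continuous at `0`: on a smaller open subgroup where the defect is below `ε` we have
`2 ‖ψ x‖ ≤ ‖ψ (2 x)‖ + ε`, and iterating this against the bound `‖ψ‖ ≤ 1/4` forces `‖ψ x‖ ≤ ε`.
-/

open Filter Topology

lemma coe_torusArg (t : 𝕋) : ((torusArg t : ℝ) : 𝕋) = t :=
  AddCircle.coe_equivIoc

lemma abs_torusArg (t : 𝕋) : |torusArg t| = ‖t‖ := by
  obtain ⟨hlo, hhi⟩ := (AddCircle.equivIoc 1 (-(1 / 2)) t).2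
  conv_rhs => rw [← coe_torusArg t]
  refine ((AddCircle.norm_coe_eq_abs_iff 1 one_ne_zero).mpr (abs_le.mpr ⟨?_, ?_⟩)).symm <;>
  · unfold torusArg; norm_num at hlo hhi ⊢; linarith

lemma eq_zero_of_coe_eq_zero_of_abs_lt_one {x : ℝ} (h : (x : 𝕋) = 0) (hx : |x| < 1) : x = 0 := by
  obtain ⟨n, rfl⟩ := (AddCircle.coe_eq_zero_iff (p := (1 : ℝ))).mp h
  rw [zsmul_one, ← Int.cast_abs, ← Int.cast_one, Int.cast_lt, Int.abs_lt_one_iff] at hx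
  simp [hx]

lemma norm_two_nsmul {t : 𝕋} (h : ‖t‖ ≤ 1 / 4) : ‖2 • t‖ = 2 * ‖t‖ := by
  have habs : |2 • torusArg t| = 2 * ‖t‖ := by
    rw [nsmul_eq_mul, abs_mul, abs_torusArg, Nat.cast_ofNat, abs_two]
  conv_lhs => rw [← coe_torusArg t, ← AddCircle.coe_nsmul]
  rw [(AddCircle.norm_coe_eq_abs_iff 1 one_ne_zero).mpr (by rw [habs]; norm_num; linarith), habs]

def defect {A : Type*} [Add A] (ω : A → 𝕋) (x y : A) : 𝕋 :=
  ω (x + y) - ω x - ω y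

lemma defect_sub_addMonoidHom {A : Type*} [AddMonoid A] (ω : A → 𝕋) (a : A →+ 𝕋) :
    defect (fun x => ω x - a x) = defect ω := by
  ext x y
  simp only [defect, map_add]
  abel

lemma defect_two_nsmul {A : Type*} [AddCommMonoid A] (ω : A → 𝕋) (a b : A) :
    defect ω (2 • a) (2 • b) =
      2 • defect ω a b + defect ω (a + b) (a + b) - defect ω a a - defect ω b b := by
  simp only [defect, two_nsmul, add_add_add_comm a a b b]
  abel

lemma two_pow_succ_nsmul {A : Type*} [AddMonoid A] (n : ℕ) (x : A) :
    2 ^ (n + 1) • x = 2 • 2 ^ n • x := by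
  rw [pow_succ', mul_smul]

section Cocycle

variable {A : Type*} [AddCommMonoid A] {r : A → A → ℝ} {C : ℝ}

lemma sum_range_doubling_eq
    (hdouble : ∀ a b, r (2 • a) (2 • b) = 2 * r a b + r (a + b) (a + b) - r a a - r b b)
    (x y : A) (N : ℕ) :
    ∑ n ∈ Finset.range N, (r (2 ^ n • (x + y)) (2 ^ n • (x + y)) - r (2 ^ n • x) (2 ^ n • x)
        - r (2 ^ n • y) (2 ^ n • y)) / 2 ^ (n + 1) =
      r (2 ^ N • x) (2 ^ N • y) / 2 ^ N - r x y := by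
  have hstep : ∀ n : ℕ, (r (2 ^ n • (x + y)) (2 ^ n • (x + y)) - r (2 ^ n • x) (2 ^ n • x)
        - r (2 ^ n • y) (2 ^ n • y)) / 2 ^ (n + 1) =
      r (2 ^ (n + 1) • x) (2 ^ (n + 1) • y) / 2 ^ (n + 1) - r (2 ^ n • x) (2 ^ n • y) / 2 ^ n := by
    intro n
    rw [two_pow_succ_nsmul, two_pow_succ_nsmul, hdouble, smul_add]
    field_simp
    ring
  simp only [hstep]
  rw [Finset.sum_range_sub (fun n => r (2 ^ n • x) (2 ^ n • y) / 2 ^ n)]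
  simp

theorem exists_bounded_coboundary_of_doubling
    (hr : ∀ x y, |r x y| ≤ C)
    (hdouble : ∀ a b, r (2 • a) (2 • b) = 2 * r a b + r (a + b) (a + b) - r a a - r b b) :
    ∃ ρ : A → ℝ, (∀ x, |ρ x| ≤ C) ∧ ∀ x y, ρ (x + y) = ρ x + ρ y - r x y := by
  set f : A → ℕ → ℝ := fun x n => r (2 ^ n • x) (2 ^ n • x) / 2 ^ (n + 1)
  have hf : ∀ x n, ‖f x n‖ ≤ C / 2 / 2 ^ n := fun x n => by
    rw [Real.norm_eq_abs, abs_div, abs_of_pos (by positivity : (0 : ℝ) < 2 ^ (n + 1))]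
    exact (div_le_div_of_nonneg_right (hr _ _) (by positivity)).trans_eq (by ring)
  have hsum : ∀ x, HasSum (f x) (∑' n, f x n) := fun x =>
    (Summable.of_norm_bounded (hasSum_geometric_two' C).summable (hf x)).hasSum
  refine ⟨fun x => ∑' n, f x n, fun x => ?_, fun x y => ?_⟩
  · simpa only [Real.norm_eq_abs] using tsum_of_norm_bounded (hasSum_geometric_two' C) (hf x)
  have hlim := (((hsum (x + y)).sub (hsum x)).sub (hsum y)).tendsto_sum_nat
  have hQ : Tendsto (fun N : ℕ => r (2 ^ N • x) (2 ^ N • y) / 2 ^ N) atTop (𝓝 0) := by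
    refine squeeze_zero_norm (fun N => ?_)
      ((tendsto_const_nhds (x := C)).div_atTop (tendsto_pow_atTop_atTop_of_one_lt one_lt_two))
    rw [Real.norm_eq_abs, abs_div, abs_of_pos (by positivity : (0 : ℝ) < 2 ^ N)]
    exact div_le_div_of_nonneg_right (hr _ _) (by positivity)
  have hlim' : Tendsto (fun N : ℕ => ∑ n ∈ Finset.range N, (f (x + y) n - f x n - f y n)) atTop
      (𝓝 (0 - r x y)) := by
    simp only [f, ← sub_div, sum_range_doubling_eq hdouble]
    exact hQ.sub_const _
  linarith [tendsto_nhds_unique hlim hlim']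

end Cocycle

theorem exists_addMonoidHom_norm_sub_le {A : Type*} [AddCommMonoid A] {ω : A → 𝕋} {C : ℝ}
    (hC : 6 * C < 1) (hω : ∀ x y, ‖defect ω x y‖ ≤ C) :
    ∃ χ : A →+ 𝕋, ∀ x, ‖ω x - χ x‖ ≤ C := by
  set r : A → A → ℝ := fun x y => torusArg (defect ω x y)
  have hr : ∀ x y, |r x y| ≤ C := fun x y => (abs_torusArg _).trans_le (hω x y)
  have hdouble : ∀ a b, r (2 • a) (2 • b) = 2 * r a b + r (a + b) (a + b) - r a a - r b b := by
    intro a b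
    -- both sides lift the same element of `𝕋` and differ by less than `1`
    have hcoe : ((2 * r a b + r (a + b) (a + b) - r a a - r b b - r (2 • a) (2 • b) : ℝ) : 𝕋)
        = 0 := by
      simp only [r, AddCircle.coe_sub, AddCircle.coe_add, two_mul, coe_torusArg]
      rw [defect_two_nsmul, two_nsmul]
      abel
    obtain ⟨h₁, h₁'⟩ := abs_le.mp (hr a b)
    obtain ⟨h₂, h₂'⟩ := abs_le.mp (hr (a + b) (a + b))
    obtain ⟨h₃, h₃'⟩ := abs_le.mp (hr a a)
    obtain ⟨h₄, h₄'⟩ := abs_le.mp (hr b b)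
    obtain ⟨h₅, h₅'⟩ := abs_le.mp (hr (2 • a) (2 • b))
    have := eq_zero_of_coe_eq_zero_of_abs_lt_one hcoe (abs_lt.mpr ⟨by linarith, by linarith⟩)
    linarith
  obtain ⟨ρ, hρC, hρ⟩ := exists_bounded_coboundary_of_doubling hr hdouble
  refine ⟨AddMonoidHom.mk' (fun x => ω x + (ρ x : 𝕋)) fun x y => ?_, fun x => ?_⟩
  · rw [hρ, AddCircle.coe_sub, AddCircle.coe_add, coe_torusArg, defect]
    abel
  · simp only [AddMonoidHom.mk'_apply, sub_add_cancel_left, norm_neg]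
    exact QuotientAddGroup.norm_mk_le_norm.trans (hρC x)

theorem AddSubgroup.exists_addMonoidHom_norm_sub_le {G : Type*} [AddCommGroup G]
    (U : AddSubgroup G) {ω : G → 𝕋} {C : ℝ} (hC : 6 * C < 1)
    (hω : ∀ x ∈ U, ∀ y ∈ U, ‖defect ω x y‖ ≤ C) :
    ∃ a : G →+ 𝕋, ∀ x ∈ U, ‖ω x - a x‖ ≤ C := by
  obtain ⟨χ, hχ⟩ := _root_.exists_addMonoidHom_norm_sub_le (ω := ω ∘ U.subtype) hC
    fun x y => hω x x.2 y y.2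
  obtain ⟨a, ha⟩ := (Module.Baer.of_divisible 𝕋).extension_property_addMonoidHom U.subtype
    U.subtype_injective χ
  refine ⟨a, fun x hx => ?_⟩
  simpa [← ha] using hχ ⟨x, hx⟩

lemma le_of_two_mul_le_succ_add {b : ℕ → ℝ} {B ε : ℝ} (hb : ∀ n, b n ≤ B)
    (h : ∀ n, 2 * b n ≤ b (n + 1) + ε) : b 0 ≤ ε := by
  have hgrow : ∀ n, (b 0 - ε) * 2 ^ n ≤ b n - ε := by
    intro n
    induction n with
    | zero => simp
    | succ n ih => rw [pow_succ]; linarith [h n]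
  by_contra! hpos
  obtain ⟨n, hn⟩ := pow_unbounded_of_one_lt ((B - ε) / (b 0 - ε)) one_lt_two
  rw [div_lt_iff₀' (sub_pos.mpr hpos)] at hn
  linarith [hgrow n, hb n]

section Nonarchimedean

variable {G : Type*} [AddCommGroup G] [TopologicalSpace G] [NonarchimedeanAddGroup G]

lemma exists_openAddSubgroup_norm_defect_lt {ω : G → 𝕋} (hω0 : ω 0 = 0)
    (hq : ContinuousAt (fun p : G × G => defect ω p.1 p.2) (0, 0)) {δ : ℝ} (hδ : 0 < δ) :
    ∃ U : OpenAddSubgroup G, ∀ x ∈ U, ∀ y ∈ U, ‖defect ω x y‖ < δ := by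
  have h00 : defect ω 0 0 = 0 := by simp [defect, hω0]
  have hball := hq.preimage_mem_nhds (Metric.ball_mem_nhds (defect ω 0 0) hδ)
  obtain ⟨U, hU⟩ := NonarchimedeanAddGroup.prod_self_subset hball
  refine ⟨U, fun x hx y hy => ?_⟩
  simpa [h00, dist_eq_norm] using hU (Set.mk_mem_prod hx hy)

lemma continuousAt_zero_of_norm_le {ψ : G → 𝕋} (hψ0 : ψ 0 = 0)
    (hq : ContinuousAt (fun p : G × G => defect ψ p.1 p.2) (0, 0)) (U : OpenAddSubgroup G)
    (hU : ∀ x ∈ U, ‖ψ x‖ ≤ 1 / 4) : ContinuousAt ψ 0 := by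
  rw [ContinuousAt, hψ0, NormedAddGroup.tendsto_nhds_zero]
  intro ε hε
  obtain ⟨V, hV⟩ := exists_openAddSubgroup_norm_defect_lt hψ0 hq (half_pos hε)
  filter_upwards [(U ⊓ V).mem_nhds_zero] with w hw
  have hmem : ∀ n : ℕ, 2 ^ n • w ∈ U ⊓ V := fun n => (U ⊓ V).nsmul_mem hw _
  have hdouble : ∀ v ∈ U ⊓ V, 2 * ‖ψ v‖ ≤ ‖ψ (2 • v)‖ + ε / 2 := by
    intro v hv
    have hsplit : 2 • ψ v = ψ (2 • v) - defect ψ v v := by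
      simp only [defect, two_nsmul]
      abel
    rw [← norm_two_nsmul (hU v hv.1), hsplit]
    exact (norm_sub_le _ _).trans (by linarith [hV v hv.2 v hv.2])
  have := le_of_two_mul_le_succ_add (b := fun n => ‖ψ (2 ^ n • w)‖) (fun n => hU _ (hmem n).1)
    fun n => by simpa only [two_pow_succ_nsmul] using hdouble _ (hmem n)
  simp only [pow_zero, one_nsmul] at this
  linarith

end Nonarchimedean

theorem stmt10 {G : Type*} [AddCommGroup G] [TopologicalSpace G] [IsTopologicalAddGroup G]
    (hlin : ∀ V ∈ nhds (0 : G), ∃ U : AddSubgroup G, IsOpen (U : Set G) ∧ (U : Set G) ⊆ V)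
    (ω : G → 𝕋) (hω0 : ω 0 = 0)
    (hq : ContinuousAt (fun p : G × G => ω (p.1 + p.2) - ω p.1 - ω p.2) (0, 0)) :
    ∃ a : G →+ 𝕋, ContinuousAt (fun g => ω g - a g) 0 := by
  have : NonarchimedeanAddGroup G :=
    { is_nonarchimedean := fun V hV =>
        let ⟨U, hUopen, hUV⟩ := hlin V hV
        ⟨⟨U, hUopen⟩, hUV⟩ }
  obtain ⟨U, hU⟩ := exists_openAddSubgroup_norm_defect_lt hω0 hq (by norm_num : (0 : ℝ) < 1 / 8)
  obtain ⟨a, ha⟩ := (U : AddSubgroup G).exists_addMonoidHom_norm_sub_le (C := 1 / 8)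
    (by norm_num) fun x hx y hy => (hU x hx y hy).le
  refine ⟨a, continuousAt_zero_of_norm_le (by simp [hω0]) ?_ U
    fun x hx => (ha x hx).trans (by norm_num)⟩
  rwa [defect_sub_addMonoidHom]
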